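/- Let A, B be algebras, R : B ⊗ A → A ⊗ B and Q : A ⊗ B → A ⊗ B linear maps (notation R(b ⊗ a) = a_R ⊗ b_R, Q(a ⊗ b) = a_Q ⊗ b_Q) satisfying the compatibility b_R ⊗ a_{R_Q} ⊗ b'_Q = b_R ⊗ a_{Q_R} ⊗ b'_Q. Suppose given linear maps μ_l : B ⊗ A → A (b ⊗ a ↦ b·a), μ_r : A ⊗ B → A (a ⊗ b ↦ a·b), ρ_r : A → A ⊗ B (a ↦ a_{(0)} ⊗ a_{(1)}), ρ_l : A → B ⊗ A (a ↦ a_{<-1>} ⊗ a_{<0>}), with ρ_r(1) = 1 ⊗ 1, ρ_l(1) = 1 ⊗ 1, 1·a = a = a·1, a_{(0)}(a_{(1)}·1) = a, (1·a_{<-1>})a_{<0>} = a, and assume: b·(a_{(0)}(a_{(1)}·a')) = a_{(0)_R}(b_R a_{(1)}·a'); ((a·a'_{<-1>})a'_{<0>})·b = (a·a'_{<-1>}b_Q)a'_{<0>_Q}; ρ_r(a • a') = (a_{(0)}·a'_{(0)_{R_{<-1>}}})a'_{(0)_{R_{<0>}}} ⊗ a_{(1)_R}a'_{(1)}; ρ_l(a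 • a') = a_{<-1>}a'_{<-1>_Q} ⊗ a_{<0>_{Q_{(0)}}}(a_{<0>_{Q_{(1)}}}·a'_{<0>}); a_{(0)_{<-1>}} ⊗ a_{(0)_{<0>}} ⊗ a_{(1)} = a_{<-1>} ⊗ a_{<0>_{(0)}} ⊗ a_{<0>_{(1)}}; a_{Q_{(0)}} ⊗ a_{Q_{(1)}} ⊗ b_Q = a_{(0)_Q} ⊗ a_{(1)} ⊗ b_Q; a_{R_{<-1>}} ⊗ a_{R_{<0>}} ⊗ b_R = a_{<-1>} ⊗ a_{<0>_R} ⊗ b_R; where a • a' := (a_{(0)}·a'_{<-1>})(a_{(1)}·a'_{<0>}). Then (A, •, 1) is an associative unital algebra. -/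
import Mathlib


open TensorProduct

set_option synthInstance.maxHeartbeats 1000000
set_option maxHeartbeats 4000000

noncomputable section

namespace LR

variable {k : Type*} [Field k]

section Toolbox

variable {X Y Z W X' Y' : Type*}
  [AddCommMonoid X] [Module k X] [AddCommMonoid Y] [Module k Y]
  [AddCommMonoid Z] [Module k Z] [AddCommMonoid W] [Module k W]
  [AddCommMonoid X'] [Module k X'] [AddCommMonoid Y'] [Module k Y']

/-- Expand the first tensor factor using `f : X →ₗ X' ⊗ Y'`. -/
def expand (f : X →ₗ[k] X' ⊗[k] Y') : X ⊗[k] Z →ₗ[k] X' ⊗[k] (Y' ⊗[k] Z) :=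
  (TensorProduct.assoc k X' Y' Z).toLinearMap ∘ₗ (TensorProduct.map f LinearMap.id)

/-- Apply `f` to the first two factors of a right-nested triple tensor. -/
def app2 (f : X ⊗[k] Y →ₗ[k] X' ⊗[k] Y') :
    X ⊗[k] (Y ⊗[k] Z) →ₗ[k] X' ⊗[k] (Y' ⊗[k] Z) :=
  (TensorProduct.assoc k X' Y' Z).toLinearMap ∘ₗ (TensorProduct.map f LinearMap.id)
    ∘ₗ (TensorProduct.assoc k X Y Z).symm.toLinearMap

/-- Contract the first two factors of a right-nested triple tensor with `m`. -/
def con2 (m : X ⊗[k] Y →ₗ[k] W) : X ⊗[k] (Y ⊗[k] Z) →ₗ[k] W ⊗[k] Z :=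
  (TensorProduct.map m LinearMap.id) ∘ₗ (TensorProduct.assoc k X Y Z).symm.toLinearMap

/-- Swap the first two factors of a right-nested triple tensor. -/
def swL : X ⊗[k] (Y ⊗[k] Z) →ₗ[k] Y ⊗[k] (X ⊗[k] Z) :=
  (TensorProduct.assoc k Y X Z).toLinearMap
    ∘ₗ (TensorProduct.map (TensorProduct.comm k X Y).toLinearMap LinearMap.id)
    ∘ₗ (TensorProduct.assoc k X Y Z).symm.toLinearMap

/-- Exchange the second and third factors of `(X ⊗ Y) ⊗ Z`. -/
def ex23 : (X ⊗[k] Y) ⊗[k] Z →ₗ[k] (X ⊗[k] Z) ⊗[k] Y :=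
  (TensorProduct.assoc k X Z Y).symm.toLinearMap
    ∘ₗ (TensorProduct.map LinearMap.id (TensorProduct.comm k Y Z).toLinearMap)
    ∘ₗ (TensorProduct.assoc k X Y Z).toLinearMap

/-- The componentwise multiplication on a tensor product of two
(not necessarily unital) multiplications. -/
def tensMul (m₁ : X ⊗[k] X →ₗ[k] X) (m₂ : Y ⊗[k] Y →ₗ[k] Y) :
    (X ⊗[k] Y) ⊗[k] (X ⊗[k] Y) →ₗ[k] X ⊗[k] Y :=
  (TensorProduct.map m₁ m₂) ∘ₗ (tensorTensorTensorComm k X Y X Y).toLinearMap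


@[simp] lemma expand_tmul (f : X →ₗ[k] X' ⊗[k] Y') (x : X) (z : Z) :
    expand f (x ⊗ₜ z) = (TensorProduct.assoc k X' Y' Z) ((f x) ⊗ₜ z) := rfl

@[simp] lemma app2_tmul (f : X ⊗[k] Y →ₗ[k] X' ⊗[k] Y') (x : X) (y : Y) (z : Z) :
    app2 f (x ⊗ₜ (y ⊗ₜ z)) = (TensorProduct.assoc k X' Y' Z) ((f (x ⊗ₜ y)) ⊗ₜ z) := rfl

@[simp] lemma con2_tmul (m : X ⊗[k] Y →ₗ[k] W) (x : X) (y : Y) (z : Z) :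
    con2 m (x ⊗ₜ (y ⊗ₜ z)) = m (x ⊗ₜ y) ⊗ₜ z := rfl

@[simp] lemma swL_tmul (x : X) (y : Y) (z : Z) :
    (swL : X ⊗[k] (Y ⊗[k] Z) →ₗ[k] _) (x ⊗ₜ (y ⊗ₜ z)) = y ⊗ₜ (x ⊗ₜ z) := rfl

@[simp] lemma ex23_tmul (x : X) (y : Y) (z : Z) :
    (ex23 : (X ⊗[k] Y) ⊗[k] Z →ₗ[k] _) ((x ⊗ₜ y) ⊗ₜ z) = (x ⊗ₜ z) ⊗ₜ y := rfl

end Toolbox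

section LRPair

variable {A B : Type*} [AddCommMonoid A] [Module k A] [AddCommMonoid B] [Module k B]

/-- `x ⊗ y ↦ Σ x·a'_S ⊗ y_S` where `S(y ⊗ a') = a'_S ⊗ y_S`. -/
def rext (mA : A ⊗[k] A →ₗ[k] A) (S : B ⊗[k] A →ₗ[k] A ⊗[k] B) (a' : A) :
    A ⊗[k] B →ₗ[k] A ⊗[k] B :=
  (TensorProduct.map mA LinearMap.id)
    ∘ₗ (TensorProduct.assoc k A A B).symm.toLinearMap
    ∘ₗ (TensorProduct.map LinearMap.id (S ∘ₗ (TensorProduct.mk k B A).flip a'))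

/-- `x ⊗ y ↦ Σ x_S ⊗ b_S · y` where `S(b ⊗ x) = x_S ⊗ b_S`. -/
def lext (mB : B ⊗[k] B →ₗ[k] B) (S : B ⊗[k] A →ₗ[k] A ⊗[k] B) (b : B) :
    A ⊗[k] B →ₗ[k] A ⊗[k] B :=
  (TensorProduct.map LinearMap.id mB)
    ∘ₗ (TensorProduct.assoc k A B B).toLinearMap
    ∘ₗ (TensorProduct.map (S ∘ₗ (TensorProduct.mk k B A) b) LinearMap.id)

/-- `x ⊗ y ↦ Σ a_S · x ⊗ y_S` where `S(a ⊗ y) = a_S ⊗ y_S`. -/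
def qlext (mA : A ⊗[k] A →ₗ[k] A) (S : A ⊗[k] B →ₗ[k] A ⊗[k] B) (a : A) :
    A ⊗[k] B →ₗ[k] A ⊗[k] B :=
  (TensorProduct.map (mA ∘ₗ (TensorProduct.comm k A A).toLinearMap) LinearMap.id)
    ∘ₗ (TensorProduct.assoc k A A B).symm.toLinearMap
    ∘ₗ (TensorProduct.map LinearMap.id (S ∘ₗ (TensorProduct.mk k A B) a))

/-- `x ⊗ y ↦ Σ x_S ⊗ y · b'_S` where `S(x ⊗ b') = x_S ⊗ b'_S`. -/
def qrext (mB : B ⊗[k] B →ₗ[k] B) (S : A ⊗[k] B →ₗ[k] A ⊗[k] B) (b' : B) :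
    A ⊗[k] B →ₗ[k] A ⊗[k] B :=
  (TensorProduct.map LinearMap.id (mB ∘ₗ (TensorProduct.comm k B B).toLinearMap))
    ∘ₗ (TensorProduct.assoc k A B B).toLinearMap
    ∘ₗ (TensorProduct.map (S ∘ₗ (TensorProduct.mk k A B).flip b') LinearMap.id)

/-- `x ⊗ y ↦ Σ y ⊗ S(x ⊗ b')`. -/
def swQ (S : A ⊗[k] B →ₗ[k] A ⊗[k] B) (b' : B) :
    A ⊗[k] B →ₗ[k] B ⊗[k] (A ⊗[k] B) :=
  (TensorProduct.map LinearMap.id S)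
    ∘ₗ (TensorProduct.map LinearMap.id ((TensorProduct.mk k A B).flip b'))
    ∘ₗ (TensorProduct.comm k A B).toLinearMap

/-- `x ⊗ y ↦ Σ v ⊗ (u ⊗ y)` where `S(b ⊗ x) = u ⊗ v`. -/
def swR (S : B ⊗[k] A →ₗ[k] A ⊗[k] B) (b : B) :
    A ⊗[k] B →ₗ[k] B ⊗[k] (A ⊗[k] B) :=
  (TensorProduct.assoc k B A B).toLinearMap
    ∘ₗ (TensorProduct.map (TensorProduct.comm k A B).toLinearMap LinearMap.id)
    ∘ₗ (TensorProduct.map (S ∘ₗ (TensorProduct.mk k B A) b) LinearMap.id)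

/-- `x ⊗ y ↦ Σ x ⊗ (v ⊗ u)` where `S(a' ⊗ y) = u ⊗ v`. -/
def swQ2 (S : A ⊗[k] B →ₗ[k] A ⊗[k] B) (a' : A) :
    A ⊗[k] B →ₗ[k] A ⊗[k] (B ⊗[k] A) :=
  TensorProduct.map LinearMap.id
    ((TensorProduct.comm k A B).toLinearMap ∘ₗ S ∘ₗ (TensorProduct.mk k A B) a')

/-- `x ⊗ y ↦ Σ u ⊗ (v ⊗ x)` where `S(y ⊗ a) = u ⊗ v`. -/
def swR2 (S : B ⊗[k] A →ₗ[k] A ⊗[k] B) (a : A) :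
    A ⊗[k] B →ₗ[k] A ⊗[k] (B ⊗[k] A) :=
  (TensorProduct.assoc k A B A).toLinearMap
    ∘ₗ (TensorProduct.map (S ∘ₗ (TensorProduct.mk k B A).flip a) LinearMap.id)
    ∘ₗ (TensorProduct.comm k A B).toLinearMap

/-- `(a ⊗ b) ⊗ (a' ⊗ b') ↦ (a ⊗ b') ⊗ (b ⊗ a')`. -/
def lrRearr : (A ⊗[k] B) ⊗[k] (A ⊗[k] B) →ₗ[k] (A ⊗[k] B) ⊗[k] (B ⊗[k] A) :=
  (tensorTensorTensorComm k A B B A).toLinearMap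
    ∘ₗ (TensorProduct.map LinearMap.id (TensorProduct.comm k A B).toLinearMap)

/-- The multiplication of the L-R-twisted tensor product:
`(a ⊗ b)(a' ⊗ b') = a_Q a'_R ⊗ b_R b'_Q`. -/
def lrMulGen (mA : A ⊗[k] A →ₗ[k] A) (mB : B ⊗[k] B →ₗ[k] B)
    (Q : A ⊗[k] B →ₗ[k] A ⊗[k] B) (R : B ⊗[k] A →ₗ[k] A ⊗[k] B) :
    (A ⊗[k] B) ⊗[k] (A ⊗[k] B) →ₗ[k] A ⊗[k] B :=
  (TensorProduct.map mA (mB ∘ₗ (TensorProduct.comm k B B).toLinearMap))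
    ∘ₗ (tensorTensorTensorComm k A B A B).toLinearMap
    ∘ₗ (TensorProduct.map Q R) ∘ₗ lrRearr

/-- `R : B ⊗ A → A ⊗ B` is a twisting map (w.r.t. the given multiplications
and units). -/
def IsTwistingMap (mA : A ⊗[k] A →ₗ[k] A) (mB : B ⊗[k] B →ₗ[k] B)
    (oneA : A) (oneB : B) (R : B ⊗[k] A →ₗ[k] A ⊗[k] B) : Prop :=
  (∀ a : A, R (oneB ⊗ₜ a) = a ⊗ₜ oneB) ∧
  (∀ b : B, R (b ⊗ₜ oneA) = oneA ⊗ₜ b) ∧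
  (∀ (a a' : A) (b : B), R (b ⊗ₜ mA (a ⊗ₜ a')) = rext mA R a' (R (b ⊗ₜ a))) ∧
  (∀ (a : A) (b b' : B), R (mB (b ⊗ₜ b') ⊗ₜ a) = lext mB R b (R (b' ⊗ₜ a)))

/-- The axioms of an L-R-twisted tensor product `A _Q⊗_R B`. -/
def IsLRPair (mA : A ⊗[k] A →ₗ[k] A) (mB : B ⊗[k] B →ₗ[k] B)
    (oneA : A) (oneB : B)
    (Q : A ⊗[k] B →ₗ[k] A ⊗[k] B) (R : B ⊗[k] A →ₗ[k] A ⊗[k] B) : Prop :=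
  IsTwistingMap mA mB oneA oneB R ∧
  (∀ a : A, Q (a ⊗ₜ oneB) = a ⊗ₜ oneB) ∧
  (∀ b : B, Q (oneA ⊗ₜ b) = oneA ⊗ₜ b) ∧
  (∀ (a a' : A) (b : B), Q (mA (a ⊗ₜ a') ⊗ₜ b) = qlext mA Q a (Q (a' ⊗ₜ b))) ∧
  (∀ (a : A) (b b' : B), Q (a ⊗ₜ mB (b ⊗ₜ b')) = qrext mB Q b' (Q (a ⊗ₜ b))) ∧
  (∀ (a : A) (b b' : B), swQ Q b' (R (b ⊗ₜ a)) = swR R b (Q (a ⊗ₜ b'))) ∧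
  (∀ (a a' : A) (b : B), swQ2 Q a' (R (b ⊗ₜ a)) = swR2 R a (Q (a' ⊗ₜ b)))

end LRPair

end LR

namespace LR

section Deform

variable {k : Type*} [Field k]
variable {A B : Type*} [Ring A] [Algebra k A] [Ring B] [Algebra k B]

/-- the deformed multiplication `a • a' = (a_{(0)}·a'_{<-1>})(a_{(1)}·a'_{<0>})`. -/
def bul (μl : B ⊗[k] A →ₗ[k] A) (μr : A ⊗[k] B →ₗ[k] A)
    (ρr : A →ₗ[k] A ⊗[k] B) (ρl : A →ₗ[k] B ⊗[k] A) : A ⊗[k] A →ₗ[k] A :=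
  (LinearMap.mul' k A) ∘ₗ (TensorProduct.map μr μl)
    ∘ₗ (tensorTensorTensorComm k A B B A).toLinearMap
    ∘ₗ (TensorProduct.map ρr ρl)

/-- The hypotheses of Proposition 4.1 (the deformed-algebra proposition). -/
def PregatHyps (R : B ⊗[k] A →ₗ[k] A ⊗[k] B) (Q : A ⊗[k] B →ₗ[k] A ⊗[k] B)
    (μl : B ⊗[k] A →ₗ[k] A) (μr : A ⊗[k] B →ₗ[k] A)
    (ρr : A →ₗ[k] A ⊗[k] B) (ρl : A →ₗ[k] B ⊗[k] A) : Prop :=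
  -- compatibility (comb1) between R and Q
  (∀ (a : A) (b b' : B), swQ Q b' (R (b ⊗ₜ a)) = swR R b (Q (a ⊗ₜ b'))) ∧
  -- unit conditions
  (ρr (1 : A) = (1 : A) ⊗ₜ (1 : B)) ∧
  (ρl (1 : A) = (1 : B) ⊗ₜ (1 : A)) ∧
  (∀ a : A, μl ((1 : B) ⊗ₜ a) = a) ∧
  (∀ a : A, μr (a ⊗ₜ (1 : B)) = a) ∧
  (∀ a : A, (LinearMap.mul' k A)
    ((TensorProduct.map LinearMap.id (μl ∘ₗ (TensorProduct.mk k B A).flip (1 : A)))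
      (ρr a)) = a) ∧
  (∀ a : A, (LinearMap.mul' k A)
    ((TensorProduct.map (μr ∘ₗ (TensorProduct.mk k A B) (1 : A)) LinearMap.id)
      (ρl a)) = a) ∧
  -- (4.2): b·(a_{(0)}(a_{(1)}·a')) = a_{(0)_R}(b_R a_{(1)}·a')
  (∀ (a a' : A) (b : B),
    μl (b ⊗ₜ ((LinearMap.mul' k A)
        ((TensorProduct.map LinearMap.id (μl ∘ₗ (TensorProduct.mk k B A).flip a'))
          (ρr a)))) =
      (LinearMap.mul' k A)
        ((TensorProduct.map LinearMap.id (μl ∘ₗ (TensorProduct.mk k B A).flip a'))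
          ((TensorProduct.map LinearMap.id (LinearMap.mul' k B))
            (expand (R ∘ₗ (TensorProduct.mk k B A) b) (ρr a))))) ∧
  -- (sup1): ((a·a'_{<-1>})a'_{<0>})·b = (a·a'_{<-1>}b_Q)a'_{<0>_Q}
  (∀ (a a' : A) (b : B),
    μr (((LinearMap.mul' k A)
        ((TensorProduct.map (μr ∘ₗ (TensorProduct.mk k A B) a) LinearMap.id)
          (ρl a'))) ⊗ₜ b) =
      (LinearMap.mul' k A)
        ((TensorProduct.map (μr ∘ₗ (TensorProduct.mk k A B) a) LinearMap.id)
          (con2 (LinearMap.mul' k B)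
            ((TensorProduct.map LinearMap.id (TensorProduct.comm k A B).toLinearMap)
              ((TensorProduct.map LinearMap.id (Q ∘ₗ (TensorProduct.mk k A B).flip b))
                (ρl a')))))) ∧
  -- (sup2)
  (∀ a a' : A,
    ρr (bul μl μr ρr ρl (a ⊗ₜ a')) =
      (TensorProduct.map LinearMap.id (LinearMap.mul' k B))
        (con2 (LinearMap.mul' k A)
          (con2 μr
            ((TensorProduct.map LinearMap.id (expand ρl))
              ((TensorProduct.map LinearMap.id (app2 R))
                ((TensorProduct.assoc k A B (A ⊗[k] B))
                  ((ρr a) ⊗ₜ[k] (ρr a')))))))) ∧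
  -- (sup3)
  (∀ a a' : A,
    ρl (bul μl μr ρr ρl (a ⊗ₜ a')) =
      (TensorProduct.map LinearMap.id (LinearMap.mul' k A))
        ((TensorProduct.map LinearMap.id (TensorProduct.map LinearMap.id μl))
          (con2 (LinearMap.mul' k B)
            ((TensorProduct.map LinearMap.id swL)
              ((TensorProduct.map LinearMap.id (TensorProduct.map LinearMap.id swL))
                ((TensorProduct.map LinearMap.id (expand ρr))
                  ((TensorProduct.map LinearMap.id (app2 Q))
                    ((TensorProduct.assoc k B A (B ⊗[k] A))
                      ((ρl a) ⊗ₜ[k] (ρl a')))))))))) ∧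
  -- (sup4)
  (∀ a : A, expand ρl (ρr a) = (TensorProduct.map LinearMap.id ρr) (ρl a)) ∧
  -- (sup5)
  (∀ (a : A) (b : B),
    expand ρr (Q (a ⊗ₜ b)) =
      (TensorProduct.map LinearMap.id (TensorProduct.comm k B B).toLinearMap)
        ((TensorProduct.assoc k A B B)
          ((TensorProduct.map (Q ∘ₗ (TensorProduct.mk k A B).flip b) LinearMap.id)
            (ρr a)))) ∧
  -- (sup6)
  (∀ (a : A) (b : B),
    expand ρl (R (b ⊗ₜ a)) =
      (TensorProduct.map LinearMap.id (R ∘ₗ (TensorProduct.mk k B A) b)) (ρl a))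

end Deform

end LR


namespace LR

section AuxDev

variable {k : Type*} [Field k]
variable {A B : Type*} [Ring A] [Algebra k A] [Ring B] [Algebra k B]
variable (R : B ⊗[k] A →ₗ[k] A ⊗[k] B) (Q : A ⊗[k] B →ₗ[k] A ⊗[k] B)
variable (μl : B ⊗[k] A →ₗ[k] A) (μr : A ⊗[k] B →ₗ[k] A)
variable (ρr : A →ₗ[k] A ⊗[k] B) (ρl : A →ₗ[k] B ⊗[k] A)

/-- `a ⊗ (x ⊗ y) ↦ μr(a ⊗ x) * y`. -/
def mll (μr : A ⊗[k] B →ₗ[k] A) : A ⊗[k] (B ⊗[k] A) →ₗ[k] A :=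
  (LinearMap.mul' k A) ∘ₗ (TensorProduct.map μr LinearMap.id)
    ∘ₗ (TensorProduct.assoc k A B A).symm.toLinearMap

@[simp] lemma mll_tmul (a : A) (x : B) (y : A) :
    mll μr (a ⊗ₜ (x ⊗ₜ y)) = μr (a ⊗ₜ x) * y := rfl

/-- `u ⊗ s ↦ u₀ * (u₁ · s)`. -/
def theta (μl : B ⊗[k] A →ₗ[k] A) (ρr : A →ₗ[k] A ⊗[k] B) : A ⊗[k] A →ₗ[k] A :=
  (LinearMap.mul' k A) ∘ₗ (TensorProduct.map LinearMap.id μl)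
    ∘ₗ (TensorProduct.assoc k A B A).toLinearMap
    ∘ₗ (TensorProduct.map ρr LinearMap.id)

/-- comb1-shaped map, version 1:
`(a1 ⊗ f) ⊗ r ↦ d' ⊗ Q(c' ⊗ r)` where `R(a1 ⊗ f) = c' ⊗ d'`. -/
def What1 : (B ⊗[k] A) ⊗[k] B →ₗ[k] B ⊗[k] (A ⊗[k] B) :=
  (TensorProduct.comm k (A ⊗[k] B) B).toLinearMap ∘ₗ (TensorProduct.map Q LinearMap.id)
    ∘ₗ ex23 ∘ₗ (TensorProduct.map R LinearMap.id)

/-- comb1-shaped map, version 2: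
`(a1 ⊗ f) ⊗ r ↦ β ⊗ (α ⊗ v)` where `Q(f ⊗ r) = u ⊗ v`, `R(a1 ⊗ u) = α ⊗ β`. -/
def What2 : (B ⊗[k] A) ⊗[k] B →ₗ[k] B ⊗[k] (A ⊗[k] B) :=
  swL ∘ₗ (TensorProduct.assoc k A B B).toLinearMap ∘ₗ (TensorProduct.map R LinearMap.id)
    ∘ₗ (TensorProduct.assoc k B A B).symm.toLinearMap
    ∘ₗ (TensorProduct.map LinearMap.id Q) ∘ₗ (TensorProduct.assoc k B A B).toLinearMap

lemma What_eq
    (hcomb : ∀ (a : A) (b b' : B), swQ Q b' (R (b ⊗ₜ a)) = swR R b (Q (a ⊗ₜ b'))) :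
    What1 R Q = What2 R Q := by
  apply TensorProduct.ext_threefold
  intro a1 f r
  simp only [What1, What2, LinearMap.comp_apply, map_tmul, LinearMap.id_apply,
    LinearEquiv.coe_coe, assoc_symm_tmul, assoc_tmul]
  have aux1 : ∀ z : A ⊗[k] B,
      (TensorProduct.comm k (A ⊗[k] B) B) ((TensorProduct.map Q LinearMap.id)
        (ex23 (z ⊗ₜ r))) = swQ Q r z := by
    intro z
    induction z using TensorProduct.induction_on with
    | zero => simp only [map_zero, zero_tmul, swQ, LinearMap.comp_apply]
    | tmul x y => simp [swQ]
    | add x y hx hy => simp only [map_add, add_tmul]; rw [hx, hy]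
  have aux2 : ∀ y : A ⊗[k] B,
      swL ((TensorProduct.assoc k A B B) ((TensorProduct.map R LinearMap.id)
        ((TensorProduct.assoc k B A B).symm (a1 ⊗ₜ y)))) = swR R a1 y := by
    intro y
    induction y using TensorProduct.induction_on with
    | zero => simp only [tmul_zero, map_zero, swR, LinearMap.comp_apply]
    | tmul u v =>
      simp only [assoc_symm_tmul, map_tmul, LinearMap.id_apply, swR,
        LinearMap.comp_apply, TensorProduct.mk_apply, LinearEquiv.coe_coe]
      generalize R (a1 ⊗ₜ u) = z
      induction z using TensorProduct.induction_on with
      | zero => simp only [map_zero, zero_tmul]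
      | tmul α β => simp
      | add x y hx hy => simp only [map_add, add_tmul]; rw [hx, hy]
    | add x y hx hy => simp only [map_add, tmul_add]; rw [hx, hy]
  rw [aux1, aux2, hcomb f a1 r]

/-- sup1-shaped map, version 1: `a0 ⊗ (c ⊗ r) ↦ μr( (Σ μr(a0⊗c₋)·c₀) ⊗ r )`. -/
def That1 (μl : B ⊗[k] A →ₗ[k] A) : A ⊗[k] (A ⊗[k] B) →ₗ[k] A :=
  μr ∘ₗ (TensorProduct.map (mll μr) LinearMap.id)
    ∘ₗ (TensorProduct.assoc k A (B ⊗[k] A) B).symm.toLinearMap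
    ∘ₗ (TensorProduct.map LinearMap.id (TensorProduct.map ρl LinearMap.id))

/-- sup1-shaped map, version 2. -/
def That2 : A ⊗[k] (A ⊗[k] B) →ₗ[k] A :=
  (mll μr) ∘ₗ (TensorProduct.map LinearMap.id (con2 (LinearMap.mul' k B)))
    ∘ₗ (TensorProduct.map LinearMap.id
        (TensorProduct.map LinearMap.id (TensorProduct.comm k A B).toLinearMap))
    ∘ₗ (TensorProduct.map LinearMap.id (TensorProduct.map LinearMap.id Q))
    ∘ₗ (TensorProduct.map LinearMap.id (TensorProduct.assoc k B A B).toLinearMap)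
    ∘ₗ (TensorProduct.map LinearMap.id (TensorProduct.map ρl LinearMap.id))

lemma That_eq
    (hsup1 : ∀ (a a' : A) (b : B),
      μr (((LinearMap.mul' k A)
        ((TensorProduct.map (μr ∘ₗ (TensorProduct.mk k A B) a) LinearMap.id)
          (ρl a'))) ⊗ₜ b) =
      (LinearMap.mul' k A)
        ((TensorProduct.map (μr ∘ₗ (TensorProduct.mk k A B) a) LinearMap.id)
          (con2 (LinearMap.mul' k B)
            ((TensorProduct.map LinearMap.id (TensorProduct.comm k A B).toLinearMap)
              ((TensorProduct.map LinearMap.id (Q ∘ₗ (TensorProduct.mk k A B).flip b))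
                (ρl a')))))) :
    That1 μr ρl μl = That2 Q μr ρl := by
  apply TensorProduct.ext'
  intro a0 y
  have aux_mll : ∀ η : B ⊗[k] A, mll μr (a0 ⊗ₜ η) =
      LinearMap.mul' k A
        ((TensorProduct.map (μr ∘ₗ (TensorProduct.mk k A B) a0) LinearMap.id) η) := by
    intro η
    induction η using TensorProduct.induction_on with
    | zero => simp only [tmul_zero, map_zero]
    | tmul e f => simp
    | add x y hx hy => simp only [map_add, tmul_add]; rw [hx, hy]
  induction y using TensorProduct.induction_on with
  | zero => simp only [tmul_zero, map_zero]
  | add x y hx hy => simp only [map_add, tmul_add]; rw [hx, hy]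
  | tmul c r =>
    simp only [That1, That2, LinearMap.comp_apply, map_tmul, LinearMap.id_apply,
      LinearEquiv.coe_coe, assoc_symm_tmul]
    rw [aux_mll, hsup1 a0 c r]
    generalize ρl c = η
    induction η using TensorProduct.induction_on with
    | zero => simp only [map_zero, zero_tmul, tmul_zero]
    | add x y hx hy => simp only [map_add, add_tmul, tmul_add]; rw [hx, hy]
    | tmul e f =>
      simp only [map_tmul, LinearMap.id_apply, LinearMap.comp_apply, assoc_tmul,
        LinearEquiv.coe_coe, LinearMap.flip_apply, TensorProduct.mk_apply]
      generalize Q (f ⊗ₜ r) = y'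
      induction y' using TensorProduct.induction_on with
      | zero => simp only [map_zero, tmul_zero]
      | tmul u v => simp [aux_mll]
      | add x y hx hy => simp only [map_add, tmul_add]; rw [hx, hy]

/-- (4.2)-shaped map, version 1 : `a1 ⊗ (u ⊗ s) ↦ μl(a1 ⊗ (u₀ * (u₁·s)))`. -/
def Lhat1 : B ⊗[k] (A ⊗[k] A) →ₗ[k] A :=
  μl ∘ₗ (TensorProduct.map LinearMap.id (theta μl ρr))

/-- (4.2)-shaped map, version 2 : `a1 ⊗ (u ⊗ s) ↦ α * ((β * u₁)·s)`,
`ρr u = u₀ ⊗ u₁`, `R(a1 ⊗ u₀) = α ⊗ β`. -/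
def Lhat2 : B ⊗[k] (A ⊗[k] A) →ₗ[k] A :=
  (LinearMap.mul' k A) ∘ₗ (TensorProduct.map LinearMap.id μl)
    ∘ₗ (TensorProduct.map LinearMap.id (TensorProduct.map (LinearMap.mul' k B) LinearMap.id))
    ∘ₗ (TensorProduct.map LinearMap.id (TensorProduct.assoc k B B A).symm.toLinearMap)
    ∘ₗ (TensorProduct.assoc k A B (B ⊗[k] A)).toLinearMap
    ∘ₗ (TensorProduct.map R LinearMap.id)
    ∘ₗ (TensorProduct.assoc k B A (B ⊗[k] A)).symm.toLinearMap
    ∘ₗ (TensorProduct.map LinearMap.id (TensorProduct.assoc k A B A).toLinearMap)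
    ∘ₗ (TensorProduct.map LinearMap.id (TensorProduct.map ρr LinearMap.id))

lemma Lhat_eq
    (h42 : ∀ (a a' : A) (b : B),
      μl (b ⊗ₜ ((LinearMap.mul' k A)
        ((TensorProduct.map LinearMap.id (μl ∘ₗ (TensorProduct.mk k B A).flip a'))
          (ρr a)))) =
      (LinearMap.mul' k A)
        ((TensorProduct.map LinearMap.id (μl ∘ₗ (TensorProduct.mk k B A).flip a'))
          ((TensorProduct.map LinearMap.id (LinearMap.mul' k B))
            (expand (R ∘ₗ (TensorProduct.mk k B A) b) (ρr a))))) :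
    Lhat1 μl ρr = Lhat2 R μl ρr := by
  apply TensorProduct.ext'
  intro a1 y
  induction y using TensorProduct.induction_on with
  | zero => simp only [tmul_zero, map_zero]
  | add x y hx hy => simp only [map_add, tmul_add]; rw [hx, hy]
  | tmul u s =>
    have aux_theta : theta μl ρr (u ⊗ₜ s) =
        LinearMap.mul' k A ((TensorProduct.map LinearMap.id
          (μl ∘ₗ (TensorProduct.mk k B A).flip s)) (ρr u)) := by
      simp only [theta, LinearMap.comp_apply, map_tmul, LinearMap.id_apply]
      generalize ρr u = P
      induction P using TensorProduct.induction_on with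
      | zero => simp only [map_zero, zero_tmul]
      | tmul x y => simp
      | add x y hx hy => simp only [map_add, add_tmul]; rw [hx, hy]
    simp only [Lhat1, Lhat2, LinearMap.comp_apply, map_tmul, LinearMap.id_apply,
      LinearEquiv.coe_coe]
    rw [aux_theta, h42 u s a1]
    simp only [expand, LinearMap.comp_apply, LinearEquiv.coe_coe]
    generalize ρr u = P
    induction P using TensorProduct.induction_on with
    | zero => simp only [map_zero, zero_tmul, tmul_zero]
    | add x y hx hy => simp only [map_add, add_tmul, tmul_add]; rw [hx, hy]
    | tmul u0 u1 =>
      simp only [map_tmul, LinearMap.id_apply, LinearMap.comp_apply,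
        TensorProduct.mk_apply, assoc_tmul, assoc_symm_tmul]
      generalize R (a1 ⊗ₜ u0) = z
      induction z using TensorProduct.induction_on with
      | zero => simp only [map_zero, zero_tmul]
      | tmul α β => simp
      | add x y hx hy => simp only [map_add, add_tmul]; rw [hx, hy]

/-- sup6, map form. -/
lemma S6_eq
    (hsup6 : ∀ (a : A) (b : B),
      expand ρl (R (b ⊗ₜ a)) =
        (TensorProduct.map LinearMap.id (R ∘ₗ (TensorProduct.mk k B A) b)) (ρl a)) :
    (TensorProduct.map ρl LinearMap.id) ∘ₗ R =
      (TensorProduct.assoc k B A B).symm.toLinearMap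
        ∘ₗ (TensorProduct.map LinearMap.id R) ∘ₗ swL
        ∘ₗ (TensorProduct.map LinearMap.id ρl) := by
  apply TensorProduct.ext'
  intro b a
  have h := hsup6 a b
  simp only [expand, LinearMap.comp_apply, LinearEquiv.coe_coe] at h
  simp only [LinearMap.comp_apply, map_tmul, LinearMap.id_apply, LinearEquiv.coe_coe]
  rw [LinearEquiv.eq_symm_apply, h]
  generalize ρl a = Y
  induction Y using TensorProduct.induction_on with
  | zero => simp only [map_zero, tmul_zero]
  | tmul e f => simp
  | add x y hx hy => simp only [map_add, tmul_add]; rw [hx, hy]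

/-- sup5, map form. -/
lemma S5_eq
    (hsup5 : ∀ (a : A) (b : B),
      expand ρr (Q (a ⊗ₜ b)) =
        (TensorProduct.map LinearMap.id (TensorProduct.comm k B B).toLinearMap)
          ((TensorProduct.assoc k A B B)
            ((TensorProduct.map (Q ∘ₗ (TensorProduct.mk k A B).flip b) LinearMap.id)
              (ρr a)))) :
    expand ρr ∘ₗ Q =
      (TensorProduct.map LinearMap.id (TensorProduct.comm k B B).toLinearMap)
        ∘ₗ (TensorProduct.assoc k A B B).toLinearMap
        ∘ₗ (TensorProduct.map Q LinearMap.id) ∘ₗ ex23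
        ∘ₗ (TensorProduct.map ρr LinearMap.id) := by
  apply TensorProduct.ext'
  intro t r
  simp only [LinearMap.comp_apply, map_tmul, LinearMap.id_apply, LinearEquiv.coe_coe]
  rw [hsup5 t r]
  have aux : ∀ P : A ⊗[k] B,
      (TensorProduct.map (Q ∘ₗ (TensorProduct.mk k A B).flip r) LinearMap.id) P =
      (TensorProduct.map Q LinearMap.id) (ex23 (P ⊗ₜ r)) := by
    intro P
    induction P using TensorProduct.induction_on with
    | zero => simp only [map_zero, zero_tmul]
    | tmul x y => simp
    | add x y hx hy => simp only [map_add, add_tmul]; rw [hx, hy]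
  rw [aux]

/-- `u ⊗ s ↦ (d*q)·s` style finisher: `(d ⊗ q) ⊗ s ↦ μl((d*q) ⊗ s)`. -/
def psiB (μl : B ⊗[k] A →ₗ[k] A) : (B ⊗[k] B) ⊗[k] A →ₗ[k] A :=
  μl ∘ₗ (TensorProduct.map (LinearMap.mul' k B) LinearMap.id)

/-- Front plumbing of the left-hand pipeline:
`(a0 ⊗ a1) ⊗ ((p ⊗ q) ⊗ (r ⊗ s)) ↦ (R(a1 ⊗ p) ⊗ q) ⊗ (a0 ⊗ (r ⊗ s))`. -/
def frontE : (A ⊗[k] B) ⊗[k] ((A ⊗[k] B) ⊗[k] (B ⊗[k] A)) →ₗ[k]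
    ((A ⊗[k] B) ⊗[k] B) ⊗[k] (A ⊗[k] (B ⊗[k] A)) :=
  (TensorProduct.map (TensorProduct.map R LinearMap.id) LinearMap.id)
    ∘ₗ (TensorProduct.map (TensorProduct.assoc k B A B).symm.toLinearMap LinearMap.id)
    ∘ₗ (tensorTensorTensorComm k B A (A ⊗[k] B) (B ⊗[k] A)).toLinearMap
    ∘ₗ (TensorProduct.map (TensorProduct.comm k A B).toLinearMap LinearMap.id)

/-- Tail of the left-hand pipeline:
`((c ⊗ d) ⊗ q) ⊗ (a0 ⊗ (r ⊗ s)) ↦ T(a0 ⊗ (c ⊗ r)) * μl((d*q) ⊗ s)`. -/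
def tailE (T : A ⊗[k] (A ⊗[k] B) →ₗ[k] A) :
    ((A ⊗[k] B) ⊗[k] B) ⊗[k] (A ⊗[k] (B ⊗[k] A)) →ₗ[k] A :=
  (LinearMap.mul' k A)
    ∘ₗ (TensorProduct.map (T ∘ₗ (TensorProduct.assoc k A A B).toLinearMap) (psiB μl))
    ∘ₗ (TensorProduct.assoc k (A ⊗[k] A) B ((B ⊗[k] B) ⊗[k] A)).symm.toLinearMap
    ∘ₗ (TensorProduct.map LinearMap.id
        (TensorProduct.comm k ((B ⊗[k] B) ⊗[k] A) B).toLinearMap)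
    ∘ₗ (TensorProduct.map LinearMap.id
        (TensorProduct.assoc k (B ⊗[k] B) A B).symm.toLinearMap)
    ∘ₗ (TensorProduct.map LinearMap.id
        (TensorProduct.map LinearMap.id (TensorProduct.comm k B A).toLinearMap))
    ∘ₗ (TensorProduct.map (TensorProduct.comm k A A).toLinearMap LinearMap.id)
    ∘ₗ (tensorTensorTensorComm k A (B ⊗[k] B) A (B ⊗[k] A)).toLinearMap
    ∘ₗ (TensorProduct.map (TensorProduct.assoc k A B B).toLinearMap LinearMap.id)

/-- The left pipeline with a parameter `T` in the sup1-slot. -/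
def calE (T : A ⊗[k] (A ⊗[k] B) →ₗ[k] A) :
    (A ⊗[k] B) ⊗[k] ((A ⊗[k] B) ⊗[k] (B ⊗[k] A)) →ₗ[k] A :=
  tailE μl T ∘ₗ frontE R

/-- Middle pipeline (after sup1 and sup6), parameterized by a comb1-slot `Wm`. -/
def curlyK (Wm : (B ⊗[k] A) ⊗[k] B →ₗ[k] B ⊗[k] (A ⊗[k] B)) :
    B ⊗[k] (((B ⊗[k] A) ⊗[k] B) ⊗[k] (B ⊗[k] A)) →ₗ[k] B ⊗[k] A :=
  (TensorProduct.map LinearMap.id (LinearMap.mul' k A))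
    ∘ₗ (TensorProduct.assoc k B A A).toLinearMap
    ∘ₗ (TensorProduct.map
        ((con2 (LinearMap.mul' k B))
          ∘ₗ (TensorProduct.map LinearMap.id (TensorProduct.comm k A B).toLinearMap)) μl)
    ∘ₗ (tensorTensorTensorComm k B B (A ⊗[k] B) A).toLinearMap
    ∘ₗ (TensorProduct.map ((TensorProduct.map LinearMap.id (LinearMap.mul' k B)) ∘ₗ swL)
        LinearMap.id)
    ∘ₗ (tensorTensorTensorComm k B (A ⊗[k] B) (B ⊗[k] B) A).toLinearMap
    ∘ₗ (TensorProduct.map Wm LinearMap.id)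
    ∘ₗ (TensorProduct.map (TensorProduct.assoc k B A B).symm.toLinearMap LinearMap.id)
    ∘ₗ (TensorProduct.assoc k B (A ⊗[k] B) ((B ⊗[k] B) ⊗[k] A)).symm.toLinearMap
    ∘ₗ (TensorProduct.map LinearMap.id (tensorTensorTensorComm k A (B ⊗[k] B) B A).toLinearMap)
    ∘ₗ (TensorProduct.map LinearMap.id
        (TensorProduct.map (TensorProduct.assoc k A B B).toLinearMap LinearMap.id))
    ∘ₗ (TensorProduct.map LinearMap.id
        (TensorProduct.map (TensorProduct.map (TensorProduct.comm k B A).toLinearMap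
          LinearMap.id) LinearMap.id))

def curlyL (Wm : (B ⊗[k] A) ⊗[k] B →ₗ[k] B ⊗[k] (A ⊗[k] B)) :
    (A ⊗[k] B) ⊗[k] (((B ⊗[k] A) ⊗[k] B) ⊗[k] (B ⊗[k] A)) →ₗ[k] A :=
  (mll μr) ∘ₗ (TensorProduct.map LinearMap.id (curlyK μl Wm))
    ∘ₗ (TensorProduct.assoc k A B (((B ⊗[k] A) ⊗[k] B) ⊗[k] (B ⊗[k] A))).toLinearMap

/-- Right-hand inner pipeline: the sup3 expression as a map of `ρl a' ⊗ ρl a''`. -/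
def sigma : (B ⊗[k] A) ⊗[k] (B ⊗[k] A) →ₗ[k] B ⊗[k] A :=
  (TensorProduct.map ((LinearMap.mul' k B) ∘ₗ (TensorProduct.comm k B B).toLinearMap)
      (theta μl ρr))
    ∘ₗ (tensorTensorTensorComm k B A B A).toLinearMap
    ∘ₗ (TensorProduct.map ((TensorProduct.comm k A B).toLinearMap ∘ₗ Q) LinearMap.id)
    ∘ₗ (tensorTensorTensorComm k A B B A).toLinearMap
    ∘ₗ (TensorProduct.map (TensorProduct.comm k B A).toLinearMap LinearMap.id)

/-- Right-hand full pipeline. -/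
def Rprime : (A ⊗[k] B) ⊗[k] ((B ⊗[k] A) ⊗[k] (B ⊗[k] A)) →ₗ[k] A :=
  (LinearMap.mul' k A) ∘ₗ (TensorProduct.map μr μl)
    ∘ₗ (tensorTensorTensorComm k A B B A).toLinearMap
    ∘ₗ (TensorProduct.map LinearMap.id (sigma Q μl ρr))

lemma bul_tmul (x y : A) : bul μl μr ρr ρl (x ⊗ₜ y) =
    (LinearMap.mul' k A) ((TensorProduct.map μr μl)
      ((tensorTensorTensorComm k A B B A) ((ρr x) ⊗ₜ (ρl y)))) := rfl

lemma sigma_eq : ∀ (Y W : B ⊗[k] A),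
    (TensorProduct.map LinearMap.id (LinearMap.mul' k A))
        ((TensorProduct.map LinearMap.id (TensorProduct.map LinearMap.id μl))
          (con2 (LinearMap.mul' k B)
            ((TensorProduct.map LinearMap.id swL)
              ((TensorProduct.map LinearMap.id (TensorProduct.map LinearMap.id swL))
                ((TensorProduct.map LinearMap.id (expand ρr))
                  ((TensorProduct.map LinearMap.id (app2 Q))
                    ((TensorProduct.assoc k B A (B ⊗[k] A))
                      (Y ⊗ₜ[k] W)))))))) = sigma Q μl ρr (Y ⊗ₜ W) := by
  intro Y W
  induction Y using TensorProduct.induction_on with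
  | zero => simp only [zero_tmul, map_zero]
  | add x y hx hy => simp only [add_tmul, map_add]; rw [hx, hy]
  | tmul g t =>
    induction W using TensorProduct.induction_on with
    | zero => simp only [tmul_zero, map_zero]
    | add x y hx hy => simp only [tmul_add, map_add]; rw [hx, hy]
    | tmul r s =>
      simp only [sigma, theta, LinearMap.comp_apply, map_tmul, LinearMap.id_apply,
        LinearEquiv.coe_coe, assoc_tmul, app2_tmul, expand_tmul, con2_tmul, swL_tmul,
        comm_tmul, tensorTensorTensorComm_tmul, LinearMap.mul'_apply]
      generalize Q (t ⊗ₜ r) = y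
      induction y using TensorProduct.induction_on with
      | zero => simp only [zero_tmul, map_zero, tmul_zero]
      | add x y hx hy => simp only [add_tmul, tmul_add, map_add]; rw [hx, hy]
      | tmul u v =>
        simp only [theta, comm_tmul, assoc_tmul, map_tmul, LinearMap.id_apply,
          expand_tmul, tensorTensorTensorComm_tmul, LinearMap.mul'_apply,
          LinearMap.comp_apply, LinearEquiv.coe_coe]
        generalize ρr u = P
        induction P using TensorProduct.induction_on with
        | zero => simp only [zero_tmul, map_zero, tmul_zero]
        | add x y hx hy => simp only [add_tmul, tmul_add, map_add]; rw [hx, hy]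
        | tmul w x =>
          simp only [assoc_tmul, map_tmul, LinearMap.id_apply, swL_tmul, con2_tmul,
            comm_tmul, LinearMap.mul'_apply, LinearMap.comp_apply,
            LinearEquiv.coe_coe]

lemma R1
    (hsup3 : ∀ a a' : A,
      ρl (bul μl μr ρr ρl (a ⊗ₜ a')) =
        (TensorProduct.map LinearMap.id (LinearMap.mul' k A))
          ((TensorProduct.map LinearMap.id (TensorProduct.map LinearMap.id μl))
            (con2 (LinearMap.mul' k B)
              ((TensorProduct.map LinearMap.id swL)
                ((TensorProduct.map LinearMap.id (TensorProduct.map LinearMap.id swL))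
                  ((TensorProduct.map LinearMap.id (expand ρr))
                    ((TensorProduct.map LinearMap.id (app2 Q))
                      ((TensorProduct.assoc k B A (B ⊗[k] A))
                        ((ρl a) ⊗ₜ[k] (ρl a')))))))))) :
    ∀ a a' a'' : A,
      bul μl μr ρr ρl (a ⊗ₜ (bul μl μr ρr ρl (a' ⊗ₜ a''))) =
        Rprime Q μl μr ρr (ρr a ⊗ₜ (ρl a' ⊗ₜ ρl a'')) := by
  intro a a' a''
  rw [bul_tmul μl μr ρr ρl a (bul μl μr ρr ρl (a' ⊗ₜ a''))]
  rw [hsup3 a' a'', sigma_eq Q μl ρr (ρl a') (ρl a'')]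
  simp only [Rprime, LinearMap.comp_apply, map_tmul, LinearMap.id_apply,
    LinearEquiv.coe_coe]

lemma L1a : ∀ (U V : A ⊗[k] B) (W : B ⊗[k] A),
    (LinearMap.mul' k A) ((TensorProduct.map μr μl)
      ((tensorTensorTensorComm k A B B A)
        (((TensorProduct.map LinearMap.id (LinearMap.mul' k B))
          (con2 (LinearMap.mul' k A)
            (con2 μr
              ((TensorProduct.map LinearMap.id (expand ρl))
                ((TensorProduct.map LinearMap.id (app2 R))
                  ((TensorProduct.assoc k A B (A ⊗[k] B)) (U ⊗ₜ[k] V))))))) ⊗ₜ W))) =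
    calE R μl (That1 μr ρl μl) (U ⊗ₜ (V ⊗ₜ W)) := by
  intro U V W
  induction U using TensorProduct.induction_on with
  | zero => simp only [zero_tmul, map_zero]
  | add x y hx hy => simp only [add_tmul, map_add]; rw [hx, hy]
  | tmul a0 a1 =>
    induction V using TensorProduct.induction_on with
    | zero => simp only [zero_tmul, tmul_zero, map_zero]
    | add x y hx hy => simp only [add_tmul, tmul_add, map_add]; rw [hx, hy]
    | tmul p q =>
      induction W using TensorProduct.induction_on with
      | zero => simp only [tmul_zero, map_zero]
      | add x y hx hy => simp only [tmul_add, map_add]; rw [hx, hy]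
      | tmul r s =>
        simp only [calE, tailE, frontE, psiB, That1, LinearMap.comp_apply, map_tmul,
          LinearMap.id_apply, LinearEquiv.coe_coe, assoc_tmul, assoc_symm_tmul,
          comm_tmul, tensorTensorTensorComm_tmul, app2_tmul, expand_tmul, con2_tmul]
        generalize R (a1 ⊗ₜ p) = z
        induction z using TensorProduct.induction_on with
        | zero => simp only [zero_tmul, map_zero, tmul_zero]
        | add x y hx hy => simp only [add_tmul, tmul_add, map_add]; rw [hx, hy]
        | tmul c d =>
          simp only [assoc_tmul, map_tmul, LinearMap.id_apply, expand_tmul,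
            comm_tmul, tensorTensorTensorComm_tmul, assoc_symm_tmul, con2_tmul,
            LinearMap.comp_apply, LinearEquiv.coe_coe, LinearMap.mul'_apply]
          generalize ρl c = η
          induction η using TensorProduct.induction_on with
          | zero => simp only [zero_tmul, map_zero, tmul_zero, zero_mul, mul_zero]
          | add x y hx hy =>
            simp only [add_tmul, tmul_add, map_add, add_mul, mul_add]; rw [hx, hy]
          | tmul e f =>
            simp only [assoc_tmul, assoc_symm_tmul, map_tmul, LinearMap.id_apply,
              con2_tmul, mll_tmul, tensorTensorTensorComm_tmul, LinearMap.mul'_apply,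
              comm_tmul, LinearMap.comp_apply, LinearEquiv.coe_coe]

lemma L1bc
    (hsup6 : ∀ (a : A) (b : B),
      expand ρl (R (b ⊗ₜ a)) =
        (TensorProduct.map LinearMap.id (R ∘ₗ (TensorProduct.mk k B A) b)) (ρl a)) :
    ∀ (U V : A ⊗[k] B) (W : B ⊗[k] A),
      calE R μl (That2 Q μr ρl) (U ⊗ₜ (V ⊗ₜ W)) =
        curlyL μl μr (What1 R Q)
          (U ⊗ₜ (((TensorProduct.map ρl LinearMap.id) V) ⊗ₜ W)) := by
  intro U V W
  induction U using TensorProduct.induction_on with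
  | zero => simp only [zero_tmul, map_zero]
  | add x y hx hy => simp only [add_tmul, map_add]; rw [hx, hy]
  | tmul a0 a1 =>
    induction V using TensorProduct.induction_on with
    | zero => simp only [zero_tmul, tmul_zero, map_zero]
    | add x y hx hy => simp only [add_tmul, tmul_add, map_add]; rw [hx, hy]
    | tmul p q =>
      induction W using TensorProduct.induction_on with
      | zero => simp only [tmul_zero, map_zero]
      | add x y hx hy => simp only [tmul_add, map_add]; rw [hx, hy]
      | tmul r s =>
        simp only [calE, frontE, LinearMap.comp_apply, map_tmul, LinearMap.id_apply,
          LinearEquiv.coe_coe, comm_tmul, tensorTensorTensorComm_tmul, assoc_symm_tmul]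
        have hz : ∀ z : A ⊗[k] B,
            tailE μl (That2 Q μr ρl) ((z ⊗ₜ q) ⊗ₜ (a0 ⊗ₜ (r ⊗ₜ s))) =
            (LinearMap.mul' k A) ((TensorProduct.map
              ((mll μr) ∘ₗ ((TensorProduct.mk k A (B ⊗[k] A)) a0)
                ∘ₗ (con2 (LinearMap.mul' k B))
                ∘ₗ (TensorProduct.map LinearMap.id (TensorProduct.comm k A B).toLinearMap)
                ∘ₗ (TensorProduct.map LinearMap.id (Q ∘ₗ (TensorProduct.mk k A B).flip r)))
              (μl ∘ₗ ((TensorProduct.mk k B A).flip s) ∘ₗ (LinearMap.mul' k B)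
                ∘ₗ ((TensorProduct.mk k B B).flip q)))
              ((TensorProduct.map ρl LinearMap.id) z)) := by
          intro z
          induction z using TensorProduct.induction_on with
          | zero => simp only [zero_tmul, map_zero, tmul_zero]
          | add x y hx hy => simp only [add_tmul, tmul_add, map_add]; rw [hx, hy]
          | tmul c d =>
            simp only [tailE, That2, psiB, LinearMap.comp_apply, map_tmul,
              LinearMap.id_apply, LinearEquiv.coe_coe, assoc_tmul, assoc_symm_tmul,
              comm_tmul, tensorTensorTensorComm_tmul, con2_tmul]
            generalize ρl c = η
            induction η using TensorProduct.induction_on with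
            | zero => simp only [zero_tmul, map_zero, tmul_zero]
            | add x y hx hy => simp only [add_tmul, tmul_add, map_add]; rw [hx, hy]
            | tmul e f =>
              simp only [assoc_tmul, map_tmul, LinearMap.id_apply, LinearMap.comp_apply,
                LinearMap.flip_apply, TensorProduct.mk_apply]
        rw [hz]
        have s6p : (TensorProduct.map ρl LinearMap.id) (R (a1 ⊗ₜ p)) =
            (TensorProduct.assoc k B A B).symm
              ((TensorProduct.map LinearMap.id (R ∘ₗ (TensorProduct.mk k B A) a1))
                (ρl p)) := by
          have h := hsup6 p a1
          simp only [expand, LinearMap.comp_apply, LinearEquiv.coe_coe] at h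
          rw [← h, LinearEquiv.symm_apply_apply]
        rw [s6p]
        generalize ρl p = Y
        induction Y using TensorProduct.induction_on with
        | zero => simp only [map_zero, zero_tmul, tmul_zero]
        | add x y hx hy => simp only [map_add, add_tmul, tmul_add]; rw [hx, hy]
        | tmul g f =>
          simp only [curlyL, curlyK, What1, LinearMap.comp_apply, map_tmul,
            LinearMap.id_apply, LinearEquiv.coe_coe, assoc_tmul, assoc_symm_tmul,
            comm_tmul, tensorTensorTensorComm_tmul, swL_tmul, con2_tmul, ex23_tmul,
            TensorProduct.mk_apply]
          generalize R (a1 ⊗ₜ f) = w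
          induction w using TensorProduct.induction_on with
          | zero => simp only [map_zero, zero_tmul, tmul_zero]
          | add x y hx hy => simp only [map_add, add_tmul, tmul_add]; rw [hx, hy]
          | tmul c' d' =>
            simp only [assoc_symm_tmul, map_tmul, LinearMap.id_apply, ex23_tmul,
              comm_tmul, LinearMap.comp_apply, LinearMap.flip_apply,
              TensorProduct.mk_apply, tensorTensorTensorComm_tmul, swL_tmul,
              LinearMap.mul'_apply]
            generalize Q (c' ⊗ₜ r) = y'
            induction y' using TensorProduct.induction_on with
            | zero =>
              simp only [map_zero, zero_tmul, tmul_zero, zero_mul, mul_zero]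
            | add x y hx hy =>
              simp only [map_add, add_tmul, tmul_add, add_mul, mul_add]
              rw [hx, hy]
            | tmul u' v' =>
              simp only [LinearEquiv.coe_coe, comm_tmul, con2_tmul, mll_tmul, map_tmul,
                assoc_tmul, LinearMap.id_apply, LinearMap.mul'_apply]
              rw [mul_assoc]

lemma Mid2
    (h42 : ∀ (a a' : A) (b : B),
      μl (b ⊗ₜ ((LinearMap.mul' k A)
        ((TensorProduct.map LinearMap.id (μl ∘ₗ (TensorProduct.mk k B A).flip a'))
          (ρr a)))) =
      (LinearMap.mul' k A)
        ((TensorProduct.map LinearMap.id (μl ∘ₗ (TensorProduct.mk k B A).flip a'))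
          ((TensorProduct.map LinearMap.id (LinearMap.mul' k B))
            (expand (R ∘ₗ (TensorProduct.mk k B A) b) (ρr a)))))
    (hsup5 : ∀ (a : A) (b : B),
      expand ρr (Q (a ⊗ₜ b)) =
        (TensorProduct.map LinearMap.id (TensorProduct.comm k B B).toLinearMap)
          ((TensorProduct.assoc k A B B)
            ((TensorProduct.map (Q ∘ₗ (TensorProduct.mk k A B).flip b) LinearMap.id)
              (ρr a)))) :
    ∀ (U : A ⊗[k] B) (Y W : B ⊗[k] A),
      curlyL μl μr (What2 R Q)
        (U ⊗ₜ (((TensorProduct.assoc k B A B).symm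
          ((TensorProduct.map LinearMap.id ρr) Y)) ⊗ₜ W)) =
      Rprime Q μl μr ρr (U ⊗ₜ (Y ⊗ₜ W)) := by
  intro U Y W
  induction U using TensorProduct.induction_on with
  | zero => simp only [zero_tmul, map_zero]
  | add x y hx hy => simp only [add_tmul, map_add]; rw [hx, hy]
  | tmul a0 a1 =>
    induction Y using TensorProduct.induction_on with
    | zero => simp only [zero_tmul, tmul_zero, map_zero]
    | add x y hx hy => simp only [add_tmul, tmul_add, map_add]; rw [hx, hy]
    | tmul g t =>
      induction W using TensorProduct.induction_on with
      | zero => simp only [tmul_zero, map_zero]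
      | add x y hx hy => simp only [tmul_add, map_add]; rw [hx, hy]
      | tmul r s =>
        simp only [map_tmul, LinearMap.id_apply]
        have hP : ∀ P : A ⊗[k] B,
            curlyL μl μr (What2 R Q) ((a0 ⊗ₜ a1) ⊗ₜ
              (((TensorProduct.assoc k B A B).symm (g ⊗ₜ P)) ⊗ₜ (r ⊗ₜ s))) =
            ((LinearMap.mul' k A) ∘ₗ
              (TensorProduct.map LinearMap.id (LinearMap.mul' k A)) ∘ₗ
              (TensorProduct.assoc k A A A).toLinearMap ∘ₗ
              (TensorProduct.map (TensorProduct.comm k A A).toLinearMap LinearMap.id) ∘ₗ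
              (TensorProduct.map
                (TensorProduct.map LinearMap.id
                  (μr ∘ₗ (TensorProduct.mk k A B) a0 ∘ₗ (LinearMap.mul' k B)
                    ∘ₗ (TensorProduct.mk k B B) g))
                (μl ∘ₗ (TensorProduct.mk k B A).flip s ∘ₗ (LinearMap.mul' k B))) ∘ₗ
              (tensorTensorTensorComm k A B B B).toLinearMap ∘ₗ
              (TensorProduct.map LinearMap.id (TensorProduct.comm k B B).toLinearMap) ∘ₗ
              (TensorProduct.map (R ∘ₗ (TensorProduct.mk k B A) a1) LinearMap.id))
            ((TensorProduct.map LinearMap.id (TensorProduct.comm k B B).toLinearMap)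
              ((TensorProduct.assoc k A B B)
                ((TensorProduct.map (Q ∘ₗ (TensorProduct.mk k A B).flip r) LinearMap.id)
                  P))) := by
          intro P
          induction P using TensorProduct.induction_on with
          | zero => simp only [map_zero, tmul_zero, zero_tmul]
          | add x y hx hy => simp only [map_add, add_tmul, tmul_add]; rw [hx, hy]
          | tmul t0 t1 =>
            simp only [curlyL, curlyK, What2, LinearMap.comp_apply, map_tmul,
              LinearMap.id_apply, LinearEquiv.coe_coe, assoc_tmul, assoc_symm_tmul,
              comm_tmul, tensorTensorTensorComm_tmul, swL_tmul, con2_tmul,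
              LinearMap.flip_apply, TensorProduct.mk_apply]
            generalize Q (t0 ⊗ₜ r) = y'
            induction y' using TensorProduct.induction_on with
            | zero => simp only [map_zero, tmul_zero, zero_tmul]
            | add x y hx hy => simp only [map_add, add_tmul, tmul_add]; rw [hx, hy]
            | tmul u' v' =>
              simp only [map_tmul, LinearMap.id_apply, LinearEquiv.coe_coe, comm_tmul,
                assoc_tmul, assoc_symm_tmul, tensorTensorTensorComm_tmul, swL_tmul,
                con2_tmul, LinearMap.comp_apply, TensorProduct.mk_apply]
              generalize R (a1 ⊗ₜ u') = w
              induction w using TensorProduct.induction_on with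
              | zero => simp only [map_zero, tmul_zero, zero_tmul]
              | add x y hx hy => simp only [map_add, add_tmul, tmul_add]; rw [hx, hy]
              | tmul α β =>
                simp only [map_tmul, LinearMap.id_apply, LinearEquiv.coe_coe,
                  comm_tmul, assoc_tmul, tensorTensorTensorComm_tmul, swL_tmul,
                  con2_tmul, mll_tmul, LinearMap.mul'_apply, LinearMap.comp_apply,
                  TensorProduct.mk_apply, LinearMap.flip_apply]
        rw [hP (ρr t), ← hsup5 t r]
        have hv : ∀ (u : A) (v : B),
            ((LinearMap.mul' k A) ((TensorProduct.map LinearMap.id (LinearMap.mul' k A)) ((TensorProduct.assoc k A A A) ((TensorProduct.map (TensorProduct.comm k A A).toLinearMap LinearMap.id) ((TensorProduct.map (TensorProduct.map LinearMap.id (μr ∘ₗ (TensorProduct.mk k A B) a0 ∘ₗ (LinearMap.mul' k B) ∘ₗ (TensorProduct.mk k B B) g)) (μl ∘ₗ (TensorProduct.mk k B A).flip s ∘ₗ (LinearMap.mul' k B))) ((tensorTensorTensorComm k A B B B) ((TensorProduct.map LinearMap.id (TensorProduct.comm k B B).toLinearMap) ((TensorProduct.map (R ∘ₗ (TensorProduct.mk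 k B A) a1) LinearMap.id) ((TensorProduct.assoc k A B B) ((ρr u) ⊗ₜ v)))))))))) =
            μr (a0 ⊗ₜ ((LinearMap.mul' k B) (g ⊗ₜ v))) *
              Lhat2 R μl ρr (a1 ⊗ₜ (u ⊗ₜ s)) := by
          intro u v
          simp only [Lhat2, LinearMap.comp_apply, map_tmul, LinearMap.id_apply,
            LinearEquiv.coe_coe]
          generalize ρr u = P'
          induction P' using TensorProduct.induction_on with
          | zero => simp only [map_zero, tmul_zero, zero_tmul, mul_zero]
          | add x y hx hy =>
            simp only [map_add, add_tmul, tmul_add, mul_add]; rw [hx, hy]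
          | tmul w x =>
            simp only [map_tmul, LinearMap.id_apply, LinearEquiv.coe_coe, comm_tmul,
              assoc_tmul, assoc_symm_tmul, tensorTensorTensorComm_tmul,
              LinearMap.comp_apply, TensorProduct.mk_apply]
            generalize R (a1 ⊗ₜ w) = z'
            induction z' using TensorProduct.induction_on with
            | zero => simp only [map_zero, tmul_zero, zero_tmul, mul_zero]
            | add x' y' hx hy =>
              simp only [map_add, add_tmul, tmul_add, mul_add]; rw [hx, hy]
            | tmul α β =>
              simp only [map_tmul, LinearMap.id_apply, LinearEquiv.coe_coe, comm_tmul,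
                assoc_tmul, assoc_symm_tmul, tensorTensorTensorComm_tmul,
                LinearMap.mul'_apply, LinearMap.comp_apply, TensorProduct.mk_apply,
                LinearMap.flip_apply]
        simp only [expand, LinearMap.comp_apply, LinearEquiv.coe_coe, Rprime, sigma,
          map_tmul, LinearMap.id_apply, comm_tmul, tensorTensorTensorComm_tmul]
        generalize Q (t ⊗ₜ r) = y
        induction y using TensorProduct.induction_on with
        | zero => simp only [map_zero, tmul_zero, zero_tmul, mul_zero, zero_mul]
        | add x y hx hy =>
          simp only [map_add, add_tmul, tmul_add, mul_add, add_mul]; rw [hx, hy]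
        | tmul u v =>
          simp only [map_tmul, LinearMap.id_apply, LinearEquiv.coe_coe, comm_tmul,
            assoc_tmul, tensorTensorTensorComm_tmul, LinearMap.mul'_apply,
            LinearMap.comp_apply]
          rw [hv u v, ← Lhat_eq R μl ρr h42]
          simp only [Lhat1, theta, LinearMap.comp_apply, map_tmul, LinearMap.id_apply,
            LinearEquiv.coe_coe, LinearMap.mul'_apply]


end AuxDev

end LR

namespace LR

/-- Under the hypotheses of the deformed-algebra proposition,
`(A, •, 1)` is an associative unital algebra. -/
theorem deformed_algebra_is_algebra
    {k : Type*} [Field k] {A B : Type*}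
    [Ring A] [Algebra k A] [Ring B] [Algebra k B]
    (R : B ⊗[k] A →ₗ[k] A ⊗[k] B) (Q : A ⊗[k] B →ₗ[k] A ⊗[k] B)
    (μl : B ⊗[k] A →ₗ[k] A) (μr : A ⊗[k] B →ₗ[k] A)
    (ρr : A →ₗ[k] A ⊗[k] B) (ρl : A →ₗ[k] B ⊗[k] A)
    (h : PregatHyps R Q μl μr ρr ρl) :
    (∀ a : A, bul μl μr ρr ρl ((1 : A) ⊗ₜ a) = a) ∧
    (∀ a : A, bul μl μr ρr ρl (a ⊗ₜ (1 : A)) = a) ∧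
    (∀ a a' a'' : A,
      bul μl μr ρr ρl ((bul μl μr ρr ρl (a ⊗ₜ a')) ⊗ₜ a'') =
        bul μl μr ρr ρl (a ⊗ₜ (bul μl μr ρr ρl (a' ⊗ₜ a'')))) := by
  obtain ⟨hcomb, hρr1, hρl1, hμl1, hμr1, hctR, hctL, h42, hsup1, hsup2, hsup3,
    hsup4, hsup5, hsup6⟩ := h
  refine ⟨?_, ?_, ?_⟩
  · intro a
    have key : ∀ w : B ⊗[k] A,
        (LinearMap.mul' k A) ((TensorProduct.map μr μl)
          ((tensorTensorTensorComm k A B B A) (((1:A) ⊗ₜ (1:B)) ⊗ₜ w))) =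
        (LinearMap.mul' k A)
          ((TensorProduct.map (μr ∘ₗ (TensorProduct.mk k A B) (1 : A)) LinearMap.id)
            w) := by
      intro w
      induction w using TensorProduct.induction_on with
      | zero => simp only [tmul_zero, map_zero]
      | tmul x y => simp [tensorTensorTensorComm_tmul, hμl1]
      | add x y hx hy => simp only [map_add, tmul_add]; rw [hx, hy]
    rw [bul_tmul, hρr1, key (ρl a), hctL a]
  · intro a
    have key : ∀ w : A ⊗[k] B,
        (LinearMap.mul' k A) ((TensorProduct.map μr μl)
          ((tensorTensorTensorComm k A B B A) (w ⊗ₜ ((1:B) ⊗ₜ (1:A))))) =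
        (LinearMap.mul' k A)
          ((TensorProduct.map LinearMap.id
            (μl ∘ₗ (TensorProduct.mk k B A).flip (1 : A))) w) := by
      intro w
      induction w using TensorProduct.induction_on with
      | zero => simp only [zero_tmul, map_zero]
      | tmul x y => simp [tensorTensorTensorComm_tmul, hμr1]
      | add x y hx hy => simp only [map_add, add_tmul]; rw [hx, hy]
    rw [bul_tmul, hρl1, key (ρr a), hctR a]
  · intro a a' a''
    rw [bul_tmul μl μr ρr ρl (bul μl μr ρr ρl (a ⊗ₜ a')) a'']
    rw [hsup2 a a']
    rw [L1a R μl μr ρl (ρr a) (ρr a') (ρl a'')]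
    rw [That_eq Q μl μr ρl hsup1]
    rw [L1bc R Q μl μr ρl hsup6 (ρr a) (ρr a') (ρl a'')]
    rw [What_eq R Q hcomb]
    have h4 : (TensorProduct.map ρl LinearMap.id) (ρr a') =
        (TensorProduct.assoc k B A B).symm
          ((TensorProduct.map LinearMap.id ρr) (ρl a')) := by
      have h' := hsup4 a'
      simp only [expand, LinearMap.comp_apply, LinearEquiv.coe_coe] at h'
      rw [← h', LinearEquiv.symm_apply_apply]
    rw [h4]
    rw [Mid2 R Q μl μr ρr h42 hsup5 (ρr a) (ρl a') (ρl a'')]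
    rw [← R1 Q μl μr ρr ρl hsup3 a a' a'']

end LR
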